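/- Let (Ω, Σ, μ) be a complete σ-finite measure space, 1 ≤ p < ∞, and X a Banach space. Then n(L_p(μ, X)) ≤ n(X). -/

import Mathlib

/-!
Composing with `T : X →L[ℝ] X` pointwise gives an operator `T_p` on `L_p(μ, X)` with
`‖T_p‖ = ‖T‖` (test on `c • 1_s` with `0 < μ s < ∞`) and `‖1 + t T_p‖ ≤ ‖1 + t T‖` for every real
`t`. The numerical radius is read off from `t ↦ ‖1 + t T‖` near `0`: for small `t > 0`,
`‖1 + t T‖ ≤ (1 + t² ‖T‖²) / (1 - t v(T))`, while `‖1 + t S‖ ≥ 1 + t x*(S x)` for every norming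
pair `(x, x*)`. Letting `t → 0⁺` gives `v(T_p) ≤ v(T)`, and taking the infimum over `‖T‖ = 1`
gives the inequality of numerical indices.
-/

open scoped ENNReal

noncomputable def vrad {X : Type*} [NormedAddCommGroup X] [NormedSpace ℝ X] (T : X →L[ℝ] X) : ℝ :=
  sSup {r : ℝ | ∃ x : X, ∃ f : X →L[ℝ] ℝ, ‖x‖ = 1 ∧ ‖f‖ = 1 ∧ f x = 1 ∧ r = |f (T x)|}

noncomputable def nindex (X : Type*) [NormedAddCommGroup X] [NormedSpace ℝ X] : ℝ :=
  sInf {r : ℝ | ∃ T : X →L[ℝ] X, ‖T‖ = 1 ∧ r = vrad T}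

open Filter Topology MeasureTheory ContinuousLinearMap

lemma eventually_nhdsGT_mul_lt_one (β : ℝ) : ∀ᶠ t in 𝓝[>] (0 : ℝ), t * β < 1 :=
  nhdsWithin_le_nhds <| (continuous_id.mul continuous_const).continuousAt.eventually_lt
    continuousAt_const (by simp)

section NumericalRadius

variable {X : Type*} [NormedAddCommGroup X] [NormedSpace ℝ X]

lemma bddAbove_vrad_set (T : X →L[ℝ] X) :
    BddAbove {r : ℝ | ∃ x : X, ∃ f : X →L[ℝ] ℝ, ‖x‖ = 1 ∧ ‖f‖ = 1 ∧ f x = 1 ∧ r = |f (T x)|} := by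
  refine ⟨‖T‖, ?_⟩
  rintro r ⟨x, f, hx, hf, -, rfl⟩
  calc |f (T x)| = ‖f (T x)‖ := (Real.norm_eq_abs _).symm
    _ ≤ ‖f‖ * (‖T‖ * ‖x‖) := f.le_of_opNorm_le_of_le le_rfl (T.le_opNorm x)
    _ = ‖T‖ := by rw [hf, hx, one_mul, mul_one]

lemma abs_apply_le_vrad (T : X →L[ℝ] X) {x : X} {f : X →L[ℝ] ℝ}
    (hx : ‖x‖ = 1) (hf : ‖f‖ = 1) (hfx : f x = 1) : |f (T x)| ≤ vrad T :=
  le_csSup (bddAbove_vrad_set T) ⟨x, f, hx, hf, hfx, rfl⟩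

lemma vrad_nonneg (T : X →L[ℝ] X) : 0 ≤ vrad T :=
  Real.sSup_nonneg fun _ ⟨_, _, _, _, _, hr⟩ => hr ▸ abs_nonneg _

lemma vrad_neg (T : X →L[ℝ] X) : vrad (-T) = vrad T := by
  simp only [vrad, neg_apply, map_neg, abs_neg]

lemma apply_le_vrad_mul_norm (T : X →L[ℝ] X) {z : X} {f : X →L[ℝ] ℝ}
    (hf : ‖f‖ = 1) (hfz : f z = ‖z‖) : f (T z) ≤ vrad T * ‖z‖ := by
  rcases eq_or_ne z 0 with rfl | hz
  · simp
  have hz' : 0 < ‖z‖ := norm_pos_iff.mpr hz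
  have hx : ‖‖z‖⁻¹ • z‖ = 1 := norm_smul_inv_norm hz
  have hfx : f (‖z‖⁻¹ • z) = 1 := by rw [map_smul, hfz, smul_eq_mul, inv_mul_cancel₀ hz'.ne']
  calc f (T z) = f (T (‖z‖⁻¹ • z)) * ‖z‖ := by
        rw [map_smul, map_smul, smul_eq_mul, mul_comm, ← mul_assoc, mul_inv_cancel₀ hz'.ne',
          one_mul]
    _ ≤ vrad T * ‖z‖ := by
        gcongr
        exact (le_abs_self _).trans (abs_apply_le_vrad T hx hf hfx)

lemma mul_norm_le_norm_sub_smul_apply (T : X →L[ℝ] X) {t : ℝ} (ht : 0 ≤ t) (z : X) :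
    (1 - t * vrad T) * ‖z‖ ≤ ‖z - t • T z‖ := by
  rcases eq_or_ne z 0 with rfl | hz
  · simp
  obtain ⟨f, hf, hfz⟩ := exists_dual_vector ℝ z (norm_ne_zero_iff.mpr hz)
  have hfz : f z = ‖z‖ := hfz
  calc (1 - t * vrad T) * ‖z‖ ≤ f z - t * f (T z) := by
        have := apply_le_vrad_mul_norm T hf hfz
        rw [hfz]; nlinarith
    _ = f (z - t • T z) := by rw [map_sub, map_smul, smul_eq_mul]
    _ ≤ ‖f‖ * ‖z - t • T z‖ := (le_abs_self _).trans (f.le_opNorm _)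
    _ = ‖z - t • T z‖ := by rw [hf, one_mul]

/-- Since `1 - tT` and `1 + tT` commute, `(1 - tT)(1 + tT) z = z - t² T² z`, and `1 - tT` is
bounded below by `1 - t v(T)`. -/
lemma norm_one_add_smul_le (T : X →L[ℝ] X) {t : ℝ} (ht : 0 ≤ t) (htT : t * vrad T < 1) :
    ‖(1 : X →L[ℝ] X) + t • T‖ ≤ (1 + t ^ 2 * ‖T‖ ^ 2) / (1 - t * vrad T) := by
  have hden : 0 < 1 - t * vrad T := sub_pos.mpr htT
  refine ContinuousLinearMap.opNorm_le_bound _ (by positivity) fun z => ?_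
  set w := ((1 : X →L[ℝ] X) + t • T) z
  have hw : w - t • T w = z - t ^ 2 • T (T z) := by
    simp only [w, add_apply, smul_apply, one_apply_eq_self, map_add, map_smul]
    module
  have hTTz : ‖T (T z)‖ ≤ ‖T‖ ^ 2 * ‖z‖ := by
    calc ‖T (T z)‖ ≤ ‖T‖ * (‖T‖ * ‖z‖) := T.le_of_opNorm_le_of_le le_rfl (T.le_opNorm z)
      _ = ‖T‖ ^ 2 * ‖z‖ := by ring
  have hlow := mul_norm_le_norm_sub_smul_apply T ht w
  rw [hw] at hlow
  have hup : ‖z - t ^ 2 • T (T z)‖ ≤ (1 + t ^ 2 * ‖T‖ ^ 2) * ‖z‖ := by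
    calc ‖z - t ^ 2 • T (T z)‖ ≤ ‖z‖ + t ^ 2 * ‖T (T z)‖ := by
          grw [norm_sub_le, norm_smul, Real.norm_of_nonneg (sq_nonneg t)]
      _ ≤ (1 + t ^ 2 * ‖T‖ ^ 2) * ‖z‖ := by nlinarith [sq_nonneg t]
  rw [div_mul_eq_mul_div, le_div_iff₀ hden, mul_comm]
  exact hlow.trans hup

lemma apply_le_of_norm_one_add_smul_le (S : X →L[ℝ] X) {β c : ℝ}
    (h : ∀ᶠ t in 𝓝[>] 0, ‖(1 : X →L[ℝ] X) + t • S‖ ≤ (1 + t ^ 2 * c) / (1 - t * β))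
    {x : X} {f : X →L[ℝ] ℝ} (hx : ‖x‖ = 1) (hf : ‖f‖ = 1) (hfx : f x = 1) :
    f (S x) ≤ β := by
  have hlim : Tendsto (fun t : ℝ => (t * c + β) / (1 - t * β)) (𝓝[>] 0) (𝓝 β) := by
    have : ContinuousAt (fun t : ℝ => (t * c + β) / (1 - t * β)) 0 :=
      ContinuousAt.div (by fun_prop) (by fun_prop) (by simp)
    simpa using this.continuousWithinAt.tendsto (s := Set.Ioi 0)
  refine ge_of_tendsto hlim ?_
  filter_upwards [h, eventually_nhdsGT_mul_lt_one β, self_mem_nhdsWithin]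
    with t hnorm htβ (ht : 0 < t)
  have hden : 0 < 1 - t * β := sub_pos.mpr htβ
  have hpair : 1 + t * f (S x) ≤ (1 + t ^ 2 * c) / (1 - t * β) :=
    calc 1 + t * f (S x) = f (((1 : X →L[ℝ] X) + t • S) x) := by
          simp [hfx]
      _ ≤ ‖f‖ * (‖(1 : X →L[ℝ] X) + t • S‖ * ‖x‖) :=
          (le_abs_self _).trans (f.le_of_opNorm_le_of_le le_rfl (le_opNorm _ _))
      _ ≤ (1 + t ^ 2 * c) / (1 - t * β) := by rwa [hf, hx, one_mul, mul_one]
  rw [le_div_iff₀ hden] at hpair ⊢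
  nlinarith

end NumericalRadius

section Comparison

variable {X Y : Type*} [NormedAddCommGroup X] [NormedSpace ℝ X]
  [NormedAddCommGroup Y] [NormedSpace ℝ Y]

lemma apply_le_vrad_of_norm_one_add_smul_le {T : X →L[ℝ] X} {S : Y →L[ℝ] Y}
    (h : ∀ t : ℝ, 0 ≤ t → ‖(1 : Y →L[ℝ] Y) + t • S‖ ≤ ‖(1 : X →L[ℝ] X) + t • T‖)
    {y : Y} {g : Y →L[ℝ] ℝ} (hy : ‖y‖ = 1) (hg : ‖g‖ = 1) (hgy : g y = 1) :
    g (S y) ≤ vrad T := by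
  refine apply_le_of_norm_one_add_smul_le S (c := ‖T‖ ^ 2) ?_ hy hg hgy
  filter_upwards [eventually_nhdsGT_mul_lt_one (vrad T), self_mem_nhdsWithin]
    with t htT (ht : 0 < t)
  exact (h t ht.le).trans (norm_one_add_smul_le T ht.le htT)

theorem vrad_le_of_norm_one_add_smul_le {T : X →L[ℝ] X} {S : Y →L[ℝ] Y}
    (h : ∀ t : ℝ, ‖(1 : Y →L[ℝ] Y) + t • S‖ ≤ ‖(1 : X →L[ℝ] X) + t • T‖) :
    vrad S ≤ vrad T := by
  refine Real.sSup_le ?_ (vrad_nonneg T)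
  rintro _ ⟨y, g, hy, hg, hgy, rfl⟩
  have hneg : ∀ t : ℝ, ‖(1 : Y →L[ℝ] Y) + t • -S‖ ≤ ‖(1 : X →L[ℝ] X) + t • -T‖ := fun t => by
    simpa only [smul_neg, ← neg_smul] using h (-t)
  refine abs_le.mpr ⟨?_, apply_le_vrad_of_norm_one_add_smul_le (fun t _ => h t) hy hg hgy⟩
  have := apply_le_vrad_of_norm_one_add_smul_le (fun t _ => hneg t) hy hg hgy
  rw [vrad_neg, neg_apply, map_neg] at this
  linarith

variable (X) in
lemma nindex_nonneg : 0 ≤ nindex X :=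
  Real.sInf_nonneg fun _ ⟨T, _, hr⟩ => hr ▸ vrad_nonneg T

lemma nindex_of_subsingleton [Subsingleton X] : nindex X = 0 := by
  rw [nindex, ← Real.sInf_empty]
  congr
  refine Set.eq_empty_of_forall_notMem ?_
  rintro _ ⟨T, hT, -⟩
  simp [Subsingleton.elim T 0] at hT

lemma nindex_le_of_forall_exists_vrad_le [Nontrivial X]
    (h : ∀ T : X →L[ℝ] X, ‖T‖ = 1 → ∃ S : Y →L[ℝ] Y, ‖S‖ = 1 ∧ vrad S ≤ vrad T) :
    nindex Y ≤ nindex X := by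
  unfold nindex
  refine le_csInf ⟨vrad 1, 1, norm_one, rfl⟩ ?_
  rintro _ ⟨T, hT, rfl⟩
  obtain ⟨S, hS, hST⟩ := h T hT
  have hbdd : BddBelow {r : ℝ | ∃ U : Y →L[ℝ] Y, ‖U‖ = 1 ∧ r = vrad U} :=
    ⟨0, fun _ ⟨U, _, hr⟩ => hr ▸ vrad_nonneg U⟩
  exact (csInf_le hbdd ⟨S, hS, rfl⟩).trans hST

end Comparison

section LpNontrivial

variable {Ω E : Type*} [MeasurableSpace Ω] [NormedAddCommGroup E] (p : ℝ≥0∞) (μ : Measure Ω)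

lemma nontrivial_of_nontrivial_Lp [Nontrivial (Lp E p μ)] : Nontrivial E := by
  by_contra! hE
  obtain ⟨f, hf⟩ := exists_ne (0 : Lp E p μ)
  exact hf (Lp.ext (Eventually.of_forall fun _ => Subsingleton.elim _ _))

variable (E) in
lemma ne_zero_of_nontrivial_Lp [Nontrivial (Lp E p μ)] : μ ≠ 0 := by
  rintro rfl
  obtain ⟨f, hf⟩ := exists_ne (0 : Lp E p (0 : Measure Ω))
  exact hf (Lp.ext (by simp [EventuallyEq]))

end LpNontrivial

section Lp

variable {Ω : Type*} [MeasurableSpace Ω] {μ : Measure Ω} {p : ℝ≥0∞} [Fact (1 ≤ p)]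
  {E F : Type*} [NormedAddCommGroup E] [NormedSpace ℝ E] [NormedAddCommGroup F] [NormedSpace ℝ F]

lemma one_compLpL : (1 : E →L[ℝ] E).compLpL p μ = 1 := by
  ext f
  filter_upwards [coeFn_compLpL (1 : E →L[ℝ] E) f] with a ha
  simpa using ha

lemma compLpL_indicatorConstLp (L : E →L[ℝ] F) {s : Set Ω} (hs : MeasurableSet s)
    (hμs : μ s ≠ ∞) (c : E) :
    L.compLpL p μ (indicatorConstLp p hs hμs c) = indicatorConstLp p hs hμs (L c) := by
  ext1
  filter_upwards [coeFn_compLpL L (indicatorConstLp p hs hμs c),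
    indicatorConstLp_coeFn (p := p) (hs := hs) (hμs := hμs) (c := c),
    indicatorConstLp_coeFn (p := p) (hs := hs) (hμs := hμs) (c := L c)] with a h₁ h₂ h₃
  rw [h₁, h₂, h₃]
  by_cases ha : a ∈ s <;> simp [ha]

lemma norm_compLpL_eq (L : E →L[ℝ] F) {s : Set Ω} (hs : MeasurableSet s) (hμs₀ : μ s ≠ 0)
    (hμs : μ s ≠ ∞) : ‖L.compLpL p μ‖ = ‖L‖ := by
  have hp : p ≠ 0 := (zero_lt_one.trans_le Fact.out).ne'
  have hscale : 0 < μ.real s ^ (1 / p.toReal) :=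
    Real.rpow_pos_of_pos (ENNReal.toReal_pos hμs₀ hμs) _
  refine le_antisymm (norm_compLpL_le L) (opNorm_le_bound _ (norm_nonneg _) fun c => ?_)
  have := (L.compLpL p μ).le_opNorm (indicatorConstLp p hs hμs c)
  rw [compLpL_indicatorConstLp, norm_indicatorConstLp' hp hμs₀, norm_indicatorConstLp' hp hμs₀,
    ← mul_assoc] at this
  exact le_of_mul_le_mul_right this hscale

lemma vrad_compLpL_le (T : E →L[ℝ] E) : vrad (T.compLpL p μ) ≤ vrad T :=
  vrad_le_of_norm_one_add_smul_le fun t => by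
    rw [← one_compLpL, ← smul_compLpL, ← add_compLpL]
    exact norm_compLpL_le _

end Lp

lemma exists_measurableSet_measure_ne_zero_ne_top {Ω : Type*} [MeasurableSpace Ω]
    {μ : Measure Ω} [SigmaFinite μ] (hμ : μ ≠ 0) :
    ∃ s, MeasurableSet s ∧ μ s ≠ 0 ∧ μ s ≠ ∞ := by
  have hunion : μ (⋃ n, spanningSets μ n) ≠ 0 := by
    rwa [iUnion_spanningSets, Ne, Measure.measure_univ_eq_zero]
  obtain ⟨n, hn⟩ := exists_measure_pos_of_not_measure_iUnion_null hunion
  exact ⟨_, measurableSet_spanningSets μ n, hn.ne', (measure_spanningSets_lt_top μ n).ne⟩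

open MeasureTheory in
theorem nindex_Lp_le_general {Ω : Type*} [MeasurableSpace Ω] (μ : Measure Ω) [SigmaFinite μ]
    (p : ℝ≥0∞) [Fact (1 ≤ p)]
    (X : Type*) [NormedAddCommGroup X] [NormedSpace ℝ X] :
    nindex ↥(Lp X p μ) ≤ nindex X := by
  rcases subsingleton_or_nontrivial (Lp X p μ) with hLp | hLp
  · exact nindex_of_subsingleton.trans_le (nindex_nonneg X)
  have : Nontrivial X := nontrivial_of_nontrivial_Lp p μ
  obtain ⟨s, hs, hμs₀, hμs⟩ :=
    exists_measurableSet_measure_ne_zero_ne_top (ne_zero_of_nontrivial_Lp X p μ)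
  exact nindex_le_of_forall_exists_vrad_le fun T hT =>
    ⟨T.compLpL p μ, (norm_compLpL_eq T hs hμs₀ hμs).trans hT, vrad_compLpL_le T⟩

open MeasureTheory in
/-- For a complete σ-finite measure space, `1 ≤ p < ∞` and a Banach space
`X`, one has `n(L_p(μ, X)) ≤ n(X)`. -/
theorem nindex_Lp_le {Ω : Type*} [MeasurableSpace Ω] (μ : Measure Ω) [SigmaFinite μ]
    (hμ : μ.IsComplete) (p : ℝ≥0∞) [Fact (1 ≤ p)] (hp : p ≠ ∞)
    (X : Type*) [NormedAddCommGroup X] [NormedSpace ℝ X] [CompleteSpace X] :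
    nindex ↥(Lp X p μ) ≤ nindex X :=
  nindex_Lp_le_general μ p X
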